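/- arXiv:2211.00097 — 4 statements merged into one kernel-verified Lean document; each statement's English description precedes it below -/
import Mathlib

section
/- In the Lagrangian setup, the twist J := Σ_{(l,λ),(l',λ')∈M̂} ω((l,λ),(l',λ'))·e_{(l,λ)}^M ⊗ e_{(l',λ')}^M ∈ K M ⊗ K M satisfies J = Σ_{λ∈L̂} e_λ^L ⊗ λ = Σ_{l∈L} l ⊗ e_l^{L̂}, where on the right-hand sides λ ∈ L̂ and l ∈ L are viewed as group elements of M inside the group algebra K M. In particular, J lies in K L ⊗ K L̂. -/
open scoped TensorProduct BigOperators
open MonoidAlgebra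

noncomputable section

/-- The group `M := L̂ × L` of the Lagrangian setup. -/
def Mgrp (K : Type) [Field K] (L : Type) [CommGroup L] : Type := (L →* Kˣ) × L

instance (K : Type) [Field K] (L : Type) [CommGroup L] : CommGroup (Mgrp K L) :=
  inferInstanceAs (CommGroup ((L →* Kˣ) × L))

variable (K : Type) [Field K] (L : Type) [CommGroup L]

/-- The character of `M = L̂ × L` attached to the pair `(l, λ) ∈ L × L̂` of the identification
`M̂ ≅ L × L̂`: it sends `(λ', l')` to `λ'(l)·λ(l')`. -/
def chi (l : L) (lam : L →* Kˣ) : Mgrp K L →* Kˣ where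
  toFun x := x.1 l * lam x.2
  map_one' := by
    show (1 : L →* Kˣ) l * lam (1 : L) = 1
    simp
  map_mul' x y := by
    show (x.1 * y.1) l * lam (x.2 * y.2) = x.1 l * lam x.2 * (y.1 l * lam y.2)
    simp only [MonoidHom.mul_apply, map_mul]
    exact mul_mul_mul_comm _ _ _ _

/-- The primitive idempotent `e_φ^M ∈ K M` attached to a character `φ` of `M`. -/
def eM (φ : Mgrp K L →* Kˣ) : MonoidAlgebra K (Mgrp K L) :=
  (Nat.card (Mgrp K L) : K)⁻¹ •
    ∑ᶠ x : Mgrp K L, ((φ x⁻¹ : Kˣ) : K) • MonoidAlgebra.of K (Mgrp K L) x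

/-- The primitive idempotent `e_λ^L` of `K L` (for `λ ∈ L̂`), viewed inside `K M` via the
identification of `L` with the subgroup `{1} × L` of `M`. -/
def eL (lam : L →* Kˣ) : MonoidAlgebra K (Mgrp K L) :=
  (Nat.card L : K)⁻¹ •
    ∑ᶠ l : L, ((lam l⁻¹ : Kˣ) : K) • MonoidAlgebra.of K (Mgrp K L) ((1 : L →* Kˣ), l)

/-- The primitive idempotent `e_l^{L̂}` of `K L̂` (for `l ∈ L`, viewed as the character
`μ ↦ μ(l)` of `L̂`), viewed inside `K M` via the identification of `L̂` with the subgroup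
`L̂ × {1}` of `M`. -/
def eLhat (l : L) : MonoidAlgebra K (Mgrp K L) :=
  (Nat.card (L →* Kˣ) : K)⁻¹ •
    ∑ᶠ mu : L →* Kˣ, (((mu l)⁻¹ : Kˣ) : K) • MonoidAlgebra.of K (Mgrp K L) (mu, (1 : L))

/-- The twist of the Lagrangian setup:
`J = Σ_{(l,λ),(l',λ')∈M̂} ω((l,λ),(l',λ'))·e_{(l,λ)}^M ⊗ e_{(l',λ')}^M`
where `ω((l,λ),(l',λ')) = λ(l')`. -/
def Jtwist : MonoidAlgebra K (Mgrp K L) ⊗[K] MonoidAlgebra K (Mgrp K L) :=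
  ∑ᶠ l : L, ∑ᶠ lam : L →* Kˣ, ∑ᶠ l' : L, ∑ᶠ lam' : L →* Kˣ,
    ((lam l' : Kˣ) : K) • (eM K L (chi K L l lam) ⊗ₜ[K] eM K L (chi K L l' lam'))

/-! ### Auxiliary lemmas -/

section AuxChar

open scoped Classical

lemma homUnits_linearIndependent (A : Type) [Monoid A] :
    LinearIndependent K (fun φ : A →* Kˣ => (fun a => ((φ a : Kˣ) : K) : A → K)) := by
  have h := (linearIndependent_monoidHom A K).comp
    (fun φ : A →* Kˣ => (Units.coeHom K).comp φ)
    (fun φ ψ hh => MonoidHom.ext fun a => Units.ext (DFunLike.congr_fun hh a))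
  exact h

lemma finiteHom (A : Type) [Monoid A] [Finite A] : Finite (A →* Kˣ) := by
  letI := Fintype.ofFinite A
  exact (homUnits_linearIndependent K A).finite

lemma card_hom_le (A : Type) [Monoid A] [Finite A] : Nat.card (A →* Kˣ) ≤ Nat.card A := by
  letI := Fintype.ofFinite A
  haveI := finiteHom K A
  letI := Fintype.ofFinite (A →* Kˣ)
  rw [Nat.card_eq_fintype_card, Nat.card_eq_fintype_card]
  simpa only [Module.finrank_fintype_fun_eq_card] using
    (homUnits_linearIndependent K A).fintype_card_le_finrank

lemma sum_char_ne (A : Type) [CommGroup A] [Fintype A] {χ : A →* Kˣ} (h : χ ≠ 1) :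
    ∑ a : A, ((χ a : Kˣ) : K) = 0 := by
  obtain ⟨a₀, h0⟩ : ∃ a, χ a ≠ 1 := by
    by_contra hc; push_neg at hc
    exact h (MonoidHom.ext fun a => hc a)
  have key : ((χ a₀ : Kˣ) : K) * ∑ a : A, ((χ a : Kˣ) : K) = ∑ a : A, ((χ a : Kˣ) : K) := by
    rw [Finset.mul_sum]
    exact Fintype.sum_bijective (a₀ * ·) (Group.mulLeft_bijective a₀) _ _
      (fun a => by rw [map_mul, Units.val_mul])
  have hc1 : ((χ a₀ : Kˣ) : K) ≠ 1 := fun hh => h0 (Units.ext hh)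
  by_contra hs
  exact hc1 (mul_right_cancel₀ hs (by rw [key, one_mul]))

lemma exists_char [Finite L]
    (hL : Nat.card (L →* Kˣ) = Nat.card L) {m : L} (hm : m ≠ 1) :
    ∃ lam : L →* Kˣ, lam m ≠ 1 := by
  by_contra hc; push_neg at hc
  set H := Subgroup.zpowers m with hH
  have hker : ∀ lam : L →* Kˣ, H ≤ lam.ker := by
    intro lam
    rw [hH, Subgroup.zpowers_le]
    exact hc lam
  have hinj : Function.Injective
      (fun lam : L →* Kˣ => QuotientGroup.lift H lam (hker lam)) := by
    intro φ ψ hh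
    ext a
    have h' : φ a = ψ a := by
      simpa using DFunLike.congr_fun hh ((QuotientGroup.mk a : L ⧸ H))
    rw [h']
  haveI : Finite (L ⧸ H) := Quotient.finite _
  haveI := finiteHom K (L ⧸ H)
  have h1 : Nat.card (L →* Kˣ) ≤ Nat.card ((L ⧸ H) →* Kˣ) :=
    Nat.card_le_card_of_injective _ hinj
  have h2 : Nat.card ((L ⧸ H) →* Kˣ) ≤ Nat.card (L ⧸ H) := card_hom_le K _
  have h3 : Nat.card L = Nat.card (L ⧸ H) * Nat.card H :=
    Subgroup.card_eq_card_quotient_mul_card_subgroup H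
  have h4 : Nat.card H = orderOf m := Nat.card_zpowers m
  have h5 : orderOf m ≠ 1 := by simpa [orderOf_eq_one_iff] using hm
  have h6 : orderOf m ≠ 0 := by
    have := orderOf_pos m; omega
  have h7 : 0 < Nat.card (L ⧸ H) := Nat.card_pos
  rw [h4] at h3
  have h9 : 2 ≤ orderOf m := by omega
  have h8 : Nat.card (L ⧸ H) < Nat.card L := by
    rw [h3]; nlinarith
  omega

/-- The evaluation character of `L̂` at `m ∈ L`. -/
def evalChar (m : L) : (L →* Kˣ) →* Kˣ where
  toFun lam := lam m
  map_one' := rfl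
  map_mul' _ _ := rfl

lemma S1 [Fintype L] (mu : L →* Kˣ) :
    ∑ l : L, ((mu l : Kˣ) : K) = if mu = 1 then (Nat.card L : K) else 0 := by
  split_ifs with h
  · subst h
    simp [Nat.card_eq_fintype_card]
  · exact sum_char_ne K L h

lemma S2 [Finite L] [Fintype (L →* Kˣ)] (hL : Nat.card (L →* Kˣ) = Nat.card L) (m : L) :
    ∑ lam : L →* Kˣ, ((lam m : Kˣ) : K) =
      if m = 1 then (Nat.card (L →* Kˣ) : K) else 0 := by
  split_ifs with h
  · subst h
    simp [Nat.card_eq_fintype_card]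
  · have hne : evalChar K L m ≠ 1 := by
      obtain ⟨lam, hlam⟩ := exists_char K L hL h
      intro hcon
      exact hlam (by simpa [evalChar] using DFunLike.congr_fun hcon lam)
    simpa [evalChar] using sum_char_ne K (L →* Kˣ) hne

end AuxChar

section AuxMgrp

instance instFintypeMgrp [Fintype L] [Fintype (L →* Kˣ)] : Fintype (Mgrp K L) :=
  inferInstanceAs (Fintype ((L →* Kˣ) × L))

lemma card_Mgrp : Nat.card (Mgrp K L) = Nat.card (L →* Kˣ) * Nat.card L :=
  Nat.card_prod _ _

lemma homInv_eq_one (f : L →* Kˣ) : f⁻¹ = 1 ↔ f = 1 := by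
  constructor
  · intro h
    ext a
    have := DFunLike.congr_fun h a
    simpa [MonoidHom.inv_apply, inv_eq_one] using this
  · intro h
    ext a
    simp [h, MonoidHom.inv_apply]

lemma chi_coe (l : L) (lam : L →* Kˣ) (x : Mgrp K L) :
    ((chi K L l lam x⁻¹ : Kˣ) : K) = ((x.1⁻¹ l : Kˣ) : K) * ((lam x.2⁻¹ : Kˣ) : K) := rfl

lemma sum_Mgrp [Fintype L] [Fintype (L →* Kˣ)] {β : Type} [AddCommMonoid β] (f : Mgrp K L → β) :
    (∑ x : Mgrp K L, f x) = ∑ mu : L →* Kˣ, ∑ m : L, f (mu, m) :=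
  Fintype.sum_prod_type (f := f)

end AuxMgrp

section Main

open scoped Classical

variable [CharZero K] [Finite L] [Fintype L] [Fintype (L →* Kˣ)]

lemma sum_eM (hL : Nat.card (L →* Kˣ) = Nat.card L) (l' : L) :
    ∑ lam' : L →* Kˣ, eM K L (chi K L l' lam') = eLhat K L l' := by
  have hL0 : (Nat.card L : K) ≠ 0 := Nat.cast_ne_zero.mpr Nat.card_pos.ne'
  have hcM : (Nat.card (Mgrp K L) : K) = (Nat.card L : K) * (Nat.card L : K) := by
    rw [card_Mgrp, hL]; push_cast; ring
  simp only [eM, finsum_eq_sum_of_fintype]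
  rw [← Finset.smul_sum, Finset.sum_comm]
  have step : ∀ x : Mgrp K L,
      (∑ lam' : L →* Kˣ, ((chi K L l' lam' x⁻¹ : Kˣ) : K) • MonoidAlgebra.of K (Mgrp K L) x)
        = (((x.1⁻¹ l' : Kˣ) : K) * (if x.2 = 1 then (Nat.card L : K) else 0)) •
            MonoidAlgebra.of K (Mgrp K L) x := by
    intro x
    rw [← Finset.sum_smul]
    congr 1
    simp only [chi_coe, ← Finset.mul_sum]
    congr 1
    rw [S2 K L hL x.2⁻¹, hL]
    simp only [inv_eq_one]
  rw [Finset.sum_congr rfl fun x _ => step x, sum_Mgrp]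
  simp only [mul_ite, mul_zero, ite_smul, zero_smul, Finset.sum_ite_eq', Finset.mem_univ,
    if_true]
  rw [eLhat, finsum_eq_sum_of_fintype, Finset.smul_sum, Finset.smul_sum]
  refine Finset.sum_congr rfl fun mu _ => ?_
  rw [smul_smul, smul_smul]
  congr 1
  rw [hcM, hL, MonoidHom.inv_apply, Units.val_inv_eq_inv_val]
  have hmu : ((mu l' : Kˣ) : K) ≠ 0 := Units.ne_zero _
  field_simp

lemma sum_sum_eM (hL : Nat.card (L →* Kˣ) = Nat.card L) (l' : L) :
    ∑ l : L, ∑ lam : L →* Kˣ, ((lam l' : Kˣ) : K) • eM K L (chi K L l lam)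
      = MonoidAlgebra.of K (Mgrp K L) ((1 : L →* Kˣ), l') := by
  have hL0 : (Nat.card L : K) ≠ 0 := Nat.cast_ne_zero.mpr Nat.card_pos.ne'
  have hcM : (Nat.card (Mgrp K L) : K) = (Nat.card L : K) * (Nat.card L : K) := by
    rw [card_Mgrp, hL]; push_cast; ring
  simp only [eM, finsum_eq_sum_of_fintype, smul_smul, Finset.smul_sum]
  have key : ∀ x : Mgrp K L,
      (∑ l : L, ∑ lam : L →* Kˣ,
        (((lam l' : Kˣ) : K) * ((Nat.card (Mgrp K L) : K)⁻¹ * ((chi K L l lam x⁻¹ : Kˣ) : K))) •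
          MonoidAlgebra.of K (Mgrp K L) x)
      = ((Nat.card (Mgrp K L) : K)⁻¹ *
          ((if x.1 = 1 then (Nat.card L : K) else 0) *
           (if l' = x.2 then (Nat.card L : K) else 0))) • MonoidAlgebra.of K (Mgrp K L) x := by
    intro x
    simp only [← Finset.sum_smul]
    congr 1
    calc ∑ l : L, ∑ lam : L →* Kˣ,
          ((lam l' : Kˣ) : K) * ((Nat.card (Mgrp K L) : K)⁻¹ * ((chi K L l lam x⁻¹ : Kˣ) : K))
        = (Nat.card (Mgrp K L) : K)⁻¹ *
            ((∑ l : L, ((x.1⁻¹ l : Kˣ) : K)) *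
             (∑ lam : L →* Kˣ, ((lam (l' * x.2⁻¹) : Kˣ) : K))) := by
          simp only [chi_coe, map_mul, Units.val_mul, Finset.mul_sum, Finset.sum_mul]
          rw [Finset.sum_comm]
          refine Finset.sum_congr rfl fun lam _ => Finset.sum_congr rfl fun l _ => by ring
      _ = (Nat.card (Mgrp K L) : K)⁻¹ *
            ((if x.1 = 1 then (Nat.card L : K) else 0) *
             (if l' = x.2 then (Nat.card L : K) else 0)) := by
          rw [S1 K L x.1⁻¹, S2 K L hL (l' * x.2⁻¹), hL]
          simp only [homInv_eq_one, mul_inv_eq_one]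
  refine Eq.trans (Finset.sum_congr rfl fun l _ => Finset.sum_comm) ?_
  refine Eq.trans Finset.sum_comm ?_
  rw [Finset.sum_congr rfl fun x _ => key x, sum_Mgrp]
  simp only [mul_ite, ite_mul, mul_zero, zero_mul, ite_smul, zero_smul, Finset.sum_ite_eq',
    Finset.sum_ite_eq, Finset.mem_univ, if_true]
  have h1 : (Nat.card (Mgrp K L) : K)⁻¹ * ((Nat.card L : K) * (Nat.card L : K)) = 1 := by
    rw [hcM]; field_simp
  rw [h1, one_smul]

lemma Jtwist_eq2 (hL : Nat.card (L →* Kˣ) = Nat.card L) :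
    Jtwist K L =
      ∑ᶠ l : L, MonoidAlgebra.of K (Mgrp K L) ((1 : L →* Kˣ), l) ⊗ₜ[K] eLhat K L l := by
  rw [Jtwist]
  simp only [finsum_eq_sum_of_fintype, ← Finset.smul_sum, ← TensorProduct.tmul_sum,
    sum_eM K L hL]
  refine Eq.trans (Finset.sum_congr rfl fun l _ => Finset.sum_comm) ?_
  refine Eq.trans Finset.sum_comm ?_
  refine Finset.sum_congr rfl fun l' _ => ?_
  simp only [TensorProduct.smul_tmul', ← TensorProduct.sum_tmul]
  rw [sum_sum_eM K L hL l']

lemma rhs1_eq_rhs2 (hL : Nat.card (L →* Kˣ) = Nat.card L) :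
    (∑ᶠ lam : L →* Kˣ, eL K L lam ⊗ₜ[K] MonoidAlgebra.of K (Mgrp K L) (lam, (1 : L))) =
      ∑ᶠ l : L, MonoidAlgebra.of K (Mgrp K L) ((1 : L →* Kˣ), l) ⊗ₜ[K] eLhat K L l := by
  simp only [eL, eLhat, finsum_eq_sum_of_fintype, TensorProduct.smul_tmul',
    TensorProduct.sum_tmul, TensorProduct.tmul_smul, TensorProduct.tmul_sum,
    Finset.smul_sum, smul_smul]
  rw [Finset.sum_comm]
  refine Finset.sum_congr rfl fun l _ => Finset.sum_congr rfl fun lam _ => ?_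
  rw [map_inv, hL]

end Main

/-- In the Lagrangian setup, the twist `J` satisfies
`J = Σ_{λ∈L̂} e_λ^L ⊗ λ = Σ_{l∈L} l ⊗ e_l^{L̂}` (where on the right-hand sides `λ ∈ L̂` and
`l ∈ L` are viewed as the group elements `(λ,1)` and `(1,l)` of `M` inside `K M`); in
particular `J` lies in `K L ⊗ K L̂`. -/
theorem stmt0 [CharZero K] [Finite L] (hL : Nat.card (L →* Kˣ) = Nat.card L) :
    Jtwist K L =
      ∑ᶠ lam : L →* Kˣ, eL K L lam ⊗ₜ[K] MonoidAlgebra.of K (Mgrp K L) (lam, (1 : L)) ∧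
    Jtwist K L =
      ∑ᶠ l : L, MonoidAlgebra.of K (Mgrp K L) ((1 : L →* Kˣ), l) ⊗ₜ[K] eLhat K L l ∧
    Jtwist K L ∈ Submodule.span K
      {z : MonoidAlgebra K (Mgrp K L) ⊗[K] MonoidAlgebra K (Mgrp K L) |
        ∃ a ∈ Submodule.span K
            (Set.range fun l : L => MonoidAlgebra.of K (Mgrp K L) ((1 : L →* Kˣ), l)),
        ∃ b ∈ Submodule.span K
            (Set.range fun lam : L →* Kˣ => MonoidAlgebra.of K (Mgrp K L) (lam, (1 : L))),
        z = a ⊗ₜ[K] b} := by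
  haveI : Finite (L →* Kˣ) := finiteHom K L
  letI : Fintype L := Fintype.ofFinite L
  letI : Fintype (L →* Kˣ) := Fintype.ofFinite _
  have h2 := Jtwist_eq2 K L hL
  have h1 : Jtwist K L =
      ∑ᶠ lam : L →* Kˣ, eL K L lam ⊗ₜ[K] MonoidAlgebra.of K (Mgrp K L) (lam, (1 : L)) := by
    rw [h2, rhs1_eq_rhs2 K L hL]
  refine ⟨h1, h2, ?_⟩
  rw [h1, finsum_eq_sum_of_fintype]
  apply Submodule.sum_mem
  intro lam _
  apply Submodule.subset_span
  refine ⟨eL K L lam, ?_, MonoidAlgebra.of K (Mgrp K L) (lam, (1 : L)),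
    Submodule.subset_span ⟨lam, rfl⟩, rfl⟩
  rw [eL, finsum_eq_sum_of_fintype]
  apply Submodule.smul_mem
  apply Submodule.sum_mem
  intro l _
  exact Submodule.smul_mem _ _ (Submodule.subset_span ⟨l, rfl⟩)

end
end

section
/- In the Lagrangian setup, (Σ_{λ∈L̂} e_λ^L ⊗ λ)·(Σ_{μ∈L̂} e_μ^L ⊗ μ⁻¹) = 1 ⊗ 1 in K M ⊗ K M; consequently the twist J of the Lagrangian setup is invertible with J⁻¹ = Σ_{λ∈L̂} e_λ^L ⊗ λ⁻¹ = Σ_{l∈L} l⁻¹ ⊗ e_l^{L̂}. -/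
open scoped TensorProduct BigOperators
open MonoidAlgebra

noncomputable section

variable (K : Type) [Field K] (L : Type) [CommGroup L]

/-- `J⁻¹ = Σ_{λ∈L̂} e_λ^L ⊗ λ⁻¹`. -/
def Jinv : MonoidAlgebra K (Mgrp K L) ⊗[K] MonoidAlgebra K (Mgrp K L) :=
  ∑ᶠ lam : L →* Kˣ, eL K L lam ⊗ₜ[K] MonoidAlgebra.of K (Mgrp K L) (lam⁻¹, (1 : L))

/-!
Every idempotent in the statement is a character idempotent
`e_φ = |A|⁻¹ Σ_a φ(a⁻¹) ι(a)` of a finite abelian group `A` mapped into `K M` by some `ι`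
(`ι = inr, inl, id` for `e^L, e^{L̂}, e^M`). These satisfy `ι(a) e_φ = φ(a) e_φ`,
`e_φ e_ψ = δ_{φψ} e_φ`, and Fourier inversion `Σ_φ φ(a) e_φ = ι(a)` for any family of characters
satisfying the dual orthogonality relation `Σ_φ φ(a) = |A| δ_{a,1}`. For `L` that relation follows
from `|L̂| = |L|`; for `L̂` and the characters `μ ↦ μ(l)` it is ordinary orthogonality on `L`.

The character `(l, λ)` of `M = L̂ × L` factors, so `e^M_{(l,λ)} = e_l^{L̂} e_λ^L`; summing the twist
with `Σ_λ e_λ^L = 1` and Fourier inversion on `L` gives `J = Σ_l l ⊗ e_l^{L̂}`, and Fourier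
inversion on `L̂` turns `Σ_λ e_λ^L ⊗ λ⁻¹` into `Σ_l l⁻¹ ⊗ e_l^{L̂}`. The eigenvalue relation makes
`J · Σ_λ e_λ^L ⊗ λ⁻¹ = Σ_{l,λ} e_λ^L ⊗ e_l^{L̂} = 1 ⊗ 1`.
-/

section Characters

variable {k G : Type*} [Field k] [Group G] [Fintype G]

lemma sum_char_eq_ite (φ : G →* kˣ) [Decidable (φ = 1)] :
    ∑ g, ((φ g : kˣ) : k) = if φ = 1 then (Fintype.card G : k) else 0 := by
  split_ifs with h
  · simp [h]
  · refine sum_hom_units_eq_zero ((Units.coeHom k).comp φ) fun h' ↦ h ?_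
    exact MonoidHom.ext fun g ↦ Units.ext (DFunLike.congr_fun h' g)

lemma sum_char_apply_eq_ite [CharZero k] [DecidableEq G] [Fintype (G →* kˣ)]
    (hcard : Fintype.card (G →* kˣ) = Fintype.card G) (a : G) :
    ∑ φ : G →* kˣ, ((φ a : kˣ) : k) = if a = 1 then (Fintype.card G : k) else 0 := by
  classical
  have hrow (φ ψ : G →* kˣ) : ∑ g, ((φ g : kˣ) : k) * (((ψ g)⁻¹ : kˣ) : k) =
      if φ = ψ then (Fintype.card G : k) else 0 := by
    have h := sum_char_eq_ite (φ * ψ⁻¹)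
    simp only [MonoidHom.mul_apply, MonoidHom.inv_apply, Units.val_mul] at h
    exact h.trans (if_congr (mul_inv_eq_one (a := φ)) rfl rfl)
  -- The character table is square and its rows are orthogonal, hence so are its columns.
  let X : Matrix (G →* kˣ) G k := .of fun φ g ↦ (Fintype.card G : k)⁻¹ * φ g
  let Y : Matrix G (G →* kˣ) k := .of fun g ψ ↦ ((ψ g)⁻¹ : kˣ)
  have hXY : X * Y = 1 := by
    ext φ ψ
    simp only [Matrix.mul_apply, Matrix.one_apply, X, Y, Matrix.of_apply, mul_assoc,
      ← Finset.mul_sum, hrow]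
    split_ifs <;> simp
  have hYX := congr_fun (congr_fun
    ((Matrix.mul_eq_one_comm_of_equiv (Fintype.equivOfCardEq hcard)).mp hXY) 1) a
  simp only [Matrix.mul_apply, Matrix.one_apply, X, Y, Matrix.of_apply, map_one, inv_one,
    Units.val_one, one_mul, ← Finset.mul_sum, @eq_comm _ 1 a] at hYX
  rw [inv_mul_eq_iff_eq_mul₀ (Nat.cast_ne_zero.mpr Fintype.card_ne_zero)] at hYX
  rw [hYX]
  split_ifs <;> simp

end Characters

section CharIdempotent

variable {k G A : Type*} [Field k] [Monoid G] [CommGroup A] [Fintype A]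

def charIdempotent (ι : A →* G) (φ : A →* kˣ) : MonoidAlgebra k G :=
  (Fintype.card A : k)⁻¹ • ∑ a, ((φ a⁻¹ : kˣ) : k) • MonoidAlgebra.of k G (ι a)

lemma of_mul_charIdempotent (ι : A →* G) (φ : A →* kˣ) (a : A) :
    MonoidAlgebra.of k G (ι a) * charIdempotent ι φ = ((φ a : kˣ) : k) • charIdempotent ι φ := by
  simp only [charIdempotent, Finset.mul_sum, Finset.smul_sum, mul_smul_comm, smul_smul,
    ← map_mul]
  refine Fintype.sum_equiv (Equiv.mulLeft a) _ _ fun b ↦ ?_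
  have := (φ a).ne_zero
  simp only [Equiv.coe_mulLeft, mul_inv_rev, map_mul, Units.val_mul, map_inv,
    Units.val_inv_eq_inv_val]
  field_simp

lemma charIdempotent_mul_charIdempotent [CharZero k] [DecidableEq (A →* kˣ)] (ι : A →* G)
    (φ ψ : A →* kˣ) :
    charIdempotent ι φ * charIdempotent ι ψ = if φ = ψ then charIdempotent ι φ else 0 := by
  classical
  have hsum := sum_char_eq_ite (k := k) (φ⁻¹ * ψ)
  simp only [MonoidHom.mul_apply, MonoidHom.inv_apply, Units.val_mul] at hsum
  conv_lhs => rw [charIdempotent, smul_mul_assoc, Finset.sum_mul]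
  simp only [smul_mul_assoc, of_mul_charIdempotent, smul_smul, ← Finset.sum_smul, map_inv, hsum,
    inv_mul_eq_one (a := φ)]
  split_ifs with h
  · rw [h, inv_mul_cancel₀ (Nat.cast_ne_zero.mpr Fintype.card_ne_zero), one_smul]
  · rw [mul_zero, zero_smul]

lemma sum_smul_charIdempotent [CharZero k] [DecidableEq A] {I : Type*} [Fintype I]
    (χ : I → A →* kˣ)
    (hχ : ∀ a, ∑ i, ((χ i a : kˣ) : k) = if a = 1 then (Fintype.card A : k) else 0)
    (ι : A →* G) (a : A) :
    ∑ i, ((χ i a : kˣ) : k) • charIdempotent ι (χ i) = MonoidAlgebra.of k G (ι a) := by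
  have hcoeff (b : A) : ∑ i, ((χ i a : kˣ) : k) * ((Fintype.card A : k)⁻¹ * (χ i b⁻¹ : kˣ)) =
      if a = b then 1 else 0 := by
    simp_rw [mul_left_comm _ (Fintype.card A : k)⁻¹, ← Finset.mul_sum, ← Units.val_mul,
      ← map_mul, hχ, mul_inv_eq_one]
    split_ifs <;> simp
  simp only [charIdempotent, Finset.smul_sum, smul_smul]
  rw [Finset.sum_comm]
  simp only [← Finset.sum_smul, hcoeff, ite_smul, one_smul, zero_smul, Finset.sum_ite_eq,
    Finset.mem_univ, if_true]

lemma sum_charIdempotent [CharZero k] [DecidableEq A] {I : Type*} [Fintype I]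
    (χ : I → A →* kˣ)
    (hχ : ∀ a, ∑ i, ((χ i a : kˣ) : k) = if a = 1 then (Fintype.card A : k) else 0)
    (ι : A →* G) :
    ∑ i, charIdempotent ι (χ i) = 1 := by
  simpa only [map_one, Units.val_one, one_smul] using sum_smul_charIdempotent χ hχ ι 1

lemma charIdempotent_prod {B : Type*} [CommGroup B] [Fintype B] (ι : A × B →* G)
    (φ : A × B →* kˣ) (φ₁ : A →* kˣ) (φ₂ : B →* kˣ) (hφ : ∀ a b, φ (a, b) = φ₁ a * φ₂ b) :
    charIdempotent ι φ =
      charIdempotent (ι.comp (.inl A B)) φ₁ * charIdempotent (ι.comp (.inr A B)) φ₂ := by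
  simp only [charIdempotent, smul_mul_smul_comm, Finset.sum_mul_sum, Fintype.card_prod,
    Fintype.sum_prod_type, Nat.cast_mul, mul_inv]
  congr 1
  refine Finset.sum_congr rfl fun a _ ↦ Finset.sum_congr rfl fun b _ ↦ ?_
  simp only [MonoidHom.comp_apply, MonoidHom.inl_apply, MonoidHom.inr_apply, ← Units.val_mul,
    ← map_mul, Prod.mk_mul_mk, mul_one, one_mul, Prod.inv_mk, hφ]

end CharIdempotent

section LagrangianIdempotents

variable {K L}

instance [Fintype L] [Fintype (L →* Kˣ)] : Fintype (Mgrp K L) :=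
  inferInstanceAs (Fintype ((L →* Kˣ) × L))

lemma eL_eq_charIdempotent [Fintype L] (lam : L →* Kˣ) :
    eL K L lam = charIdempotent (MonoidHom.inr (L →* Kˣ) L : L →* Mgrp K L) lam := by
  unfold eL charIdempotent
  rw [finsum_eq_sum_of_fintype, Nat.card_eq_fintype_card]
  rfl

lemma eLhat_eq_charIdempotent [Fintype (L →* Kˣ)] (l : L) :
    eLhat K L l =
      charIdempotent (MonoidHom.inl (L →* Kˣ) L : (L →* Kˣ) →* Mgrp K L) (MonoidHom.eval l) := by
  unfold eLhat charIdempotent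
  rw [finsum_eq_sum_of_fintype, Nat.card_eq_fintype_card]
  rfl

lemma eM_eq_charIdempotent [Fintype L] [Fintype (L →* Kˣ)] (φ : Mgrp K L →* Kˣ) :
    eM K L φ = charIdempotent (MonoidHom.id (Mgrp K L)) φ := by
  unfold eM charIdempotent
  rw [finsum_eq_sum_of_fintype, Nat.card_eq_fintype_card]
  rfl

lemma eM_chi [Fintype L] [Fintype (L →* Kˣ)] (l : L) (lam : L →* Kˣ) :
    eM K L (chi K L l lam) = eLhat K L l * eL K L lam := by
  rw [eM_eq_charIdempotent, eLhat_eq_charIdempotent, eL_eq_charIdempotent]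
  convert charIdempotent_prod (A := L →* Kˣ) (B := L) (G := Mgrp K L) (MonoidHom.id _)
    (chi K L l lam) (MonoidHom.eval l) lam fun _ _ ↦ rfl using 2 <;> rfl

lemma of_mul_eL [Fintype L] (l : L) (lam : L →* Kˣ) :
    MonoidAlgebra.of K (Mgrp K L) ((1 : L →* Kˣ), l) * eL K L lam =
      ((lam l : Kˣ) : K) • eL K L lam := by
  rw [eL_eq_charIdempotent]
  exact of_mul_charIdempotent _ _ l

lemma of_mul_eLhat [Fintype (L →* Kˣ)] (mu : L →* Kˣ) (l : L) :
    MonoidAlgebra.of K (Mgrp K L) (mu, (1 : L)) * eLhat K L l =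
      ((mu l : Kˣ) : K) • eLhat K L l := by
  rw [eLhat_eq_charIdempotent]
  exact of_mul_charIdempotent _ _ mu

lemma eL_mul_eL [CharZero K] [Fintype L] [DecidableEq (L →* Kˣ)] (lam mu : L →* Kˣ) :
    eL K L lam * eL K L mu = if lam = mu then eL K L lam else 0 := by
  simp only [eL_eq_charIdempotent]
  exact charIdempotent_mul_charIdempotent _ _ _

lemma of_mk_mul_of_mk_inv (lam : L →* Kˣ) :
    MonoidAlgebra.of K (Mgrp K L) (lam, (1 : L)) *
      MonoidAlgebra.of K (Mgrp K L) (lam⁻¹, (1 : L)) = 1 := by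
  have h : ((lam, (1 : L)) : Mgrp K L) * (lam⁻¹, 1) = 1 :=
    Prod.ext (mul_inv_cancel lam) (mul_one 1)
  exact (map_mul (MonoidAlgebra.of K (Mgrp K L)) _ _).symm.trans
    ((congrArg _ h).trans (map_one _))

end LagrangianIdempotents

section LagrangianTwist

open TensorProduct

variable {K L} [CharZero K] [Fintype L] [Fintype (L →* Kˣ)]

lemma sum_smul_eL (hL : Nat.card (L →* Kˣ) = Nat.card L) (l : L) :
    ∑ lam : L →* Kˣ, ((lam l : Kˣ) : K) • eL K L lam =
      MonoidAlgebra.of K (Mgrp K L) ((1 : L →* Kˣ), l) := by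
  classical
  rw [Nat.card_eq_fintype_card, Nat.card_eq_fintype_card] at hL
  simp only [eL_eq_charIdempotent]
  exact sum_smul_charIdempotent (fun lam ↦ lam) (sum_char_apply_eq_ite hL) (G := Mgrp K L)
    (MonoidHom.inr _ _) l

lemma sum_smul_eLhat (hL : Nat.card (L →* Kˣ) = Nat.card L) (mu : L →* Kˣ) :
    ∑ l : L, ((mu l : Kˣ) : K) • eLhat K L l =
      MonoidAlgebra.of K (Mgrp K L) (mu, (1 : L)) := by
  classical
  rw [Nat.card_eq_fintype_card, Nat.card_eq_fintype_card] at hL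
  have hχ (nu : L →* Kˣ) : ∑ l : L, ((MonoidHom.eval l nu : Kˣ) : K) =
      if nu = 1 then (Fintype.card (L →* Kˣ) : K) else 0 := by
    rw [hL]
    exact sum_char_eq_ite nu
  have key := sum_smul_charIdempotent (fun l : L ↦ MonoidHom.eval l) hχ (G := Mgrp K L)
    (MonoidHom.inl _ _) mu
  simp only [MonoidHom.eval_apply_apply] at key
  simp only [eLhat_eq_charIdempotent]
  exact key

lemma sum_eL (hL : Nat.card (L →* Kˣ) = Nat.card L) : ∑ lam : L →* Kˣ, eL K L lam = 1 := by
  have := sum_smul_eL hL 1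
  simp only [map_one, Units.val_one, one_smul] at this
  exact this.trans (map_one (MonoidAlgebra.of K (Mgrp K L)))

lemma sum_eLhat (hL : Nat.card (L →* Kˣ) = Nat.card L) : ∑ l : L, eLhat K L l = 1 := by
  have := sum_smul_eLhat hL 1
  simp only [MonoidHom.one_apply, Units.val_one, one_smul] at this
  exact this.trans (map_one (MonoidAlgebra.of K (Mgrp K L)))

lemma Jtwist_eq_sum_tmul_eLhat (hL : Nat.card (L →* Kˣ) = Nat.card L) :
    Jtwist K L = ∑ l : L, MonoidAlgebra.of K (Mgrp K L) ((1 : L →* Kˣ), l) ⊗ₜ[K] eLhat K L l := by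
  have hfactor (l' : L) :
      ∑ l : L, ∑ lam : L →* Kˣ, ((lam l' : Kˣ) : K) • (eLhat K L l * eL K L lam) =
        MonoidAlgebra.of K (Mgrp K L) ((1 : L →* Kˣ), l') := by
    simp only [← mul_smul_comm, ← Finset.mul_sum, ← Finset.sum_mul, sum_smul_eL hL, sum_eLhat hL,
      one_mul]
  simp only [Jtwist, finsum_eq_sum_of_fintype, eM_chi, smul_tmul', ← tmul_sum, ← Finset.mul_sum,
    sum_eL hL, mul_one, ← hfactor, sum_tmul]
  exact (Finset.sum_congr rfl fun _ _ ↦ Finset.sum_comm).trans Finset.sum_comm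

lemma Jinv_eq_sum_tmul_eLhat (hL : Nat.card (L →* Kˣ) = Nat.card L) :
    Jinv K L = ∑ l : L, MonoidAlgebra.of K (Mgrp K L) ((1 : L →* Kˣ), l⁻¹) ⊗ₜ[K] eLhat K L l := by
  simp only [Jinv, finsum_eq_sum_of_fintype, ← sum_smul_eLhat hL, tmul_sum, ← smul_tmul,
    MonoidHom.inv_apply, ← map_inv]
  rw [Finset.sum_comm]
  simp only [← sum_tmul, sum_smul_eL hL]

lemma sum_tmul_mul_sum_tmul_inv (hL : Nat.card (L →* Kˣ) = Nat.card L) :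
    (∑ lam : L →* Kˣ, eL K L lam ⊗ₜ[K] MonoidAlgebra.of K (Mgrp K L) (lam, (1 : L))) *
      (∑ mu : L →* Kˣ, eL K L mu ⊗ₜ[K] MonoidAlgebra.of K (Mgrp K L) (mu⁻¹, (1 : L))) =
      (1 : MonoidAlgebra K (Mgrp K L)) ⊗ₜ[K] (1 : MonoidAlgebra K (Mgrp K L)) := by
  classical
  simp only [Finset.sum_mul_sum, Algebra.TensorProduct.tmul_mul_tmul, eL_mul_eL, ite_tmul,
    Finset.sum_ite_eq, Finset.mem_univ, if_true, of_mk_mul_of_mk_inv, ← sum_tmul, sum_eL hL]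

lemma Jtwist_mul_Jinv (hL : Nat.card (L →* Kˣ) = Nat.card L) : Jtwist K L * Jinv K L = 1 := by
  rw [Jtwist_eq_sum_tmul_eLhat hL, Jinv, finsum_eq_sum_of_fintype, Finset.sum_mul_sum]
  simp only [Algebra.TensorProduct.tmul_mul_tmul, of_mul_eL, mul_comm (eLhat K L _),
    of_mul_eLhat, smul_tmul_smul, MonoidHom.inv_apply, Units.mul_inv, one_smul, ← sum_tmul,
    sum_eL hL, ← tmul_sum, sum_eLhat hL, Algebra.TensorProduct.one_def]

end LagrangianTwist

/-- In the Lagrangian setup,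
`(Σ_{λ∈L̂} e_λ^L ⊗ λ)·(Σ_{μ∈L̂} e_μ^L ⊗ μ⁻¹) = 1 ⊗ 1` in `K M ⊗ K M`; consequently the twist
`J` of the Lagrangian setup is invertible with
`J⁻¹ = Σ_{λ∈L̂} e_λ^L ⊗ λ⁻¹ = Σ_{l∈L} l⁻¹ ⊗ e_l^{L̂}`. -/
theorem stmt1 [CharZero K] [Finite L] (hL : Nat.card (L →* Kˣ) = Nat.card L) :
    (∑ᶠ lam : L →* Kˣ, eL K L lam ⊗ₜ[K] MonoidAlgebra.of K (Mgrp K L) (lam, (1 : L))) *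
      (∑ᶠ mu : L →* Kˣ, eL K L mu ⊗ₜ[K] MonoidAlgebra.of K (Mgrp K L) (mu⁻¹, (1 : L))) =
      (1 : MonoidAlgebra K (Mgrp K L)) ⊗ₜ[K] (1 : MonoidAlgebra K (Mgrp K L)) ∧
    Jtwist K L * Jinv K L = 1 ∧
    Jinv K L * Jtwist K L = 1 ∧
    Jinv K L =
      ∑ᶠ l : L, MonoidAlgebra.of K (Mgrp K L) ((1 : L →* Kˣ), l⁻¹) ⊗ₜ[K] eLhat K L l := by
  have : Finite (L →* Kˣ) := Nat.finite_of_card_ne_zero (hL ▸ Nat.card_pos.ne')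
  let _ := Fintype.ofFinite L
  let _ := Fintype.ofFinite (L →* Kˣ)
  simp only [finsum_eq_sum_of_fintype]
  exact ⟨sum_tmul_mul_sum_tmul_inv hL, Jtwist_mul_Jinv hL,
    (mul_comm _ _).trans (Jtwist_mul_Jinv hL), Jinv_eq_sum_tmul_eLhat hL⟩

end
end

section
/- Let K be an algebraically closed field of characteristic zero, G a finite group, M ≤ G an abelian subgroup, ω : M̂ × M̂ → Kˣ a normalized non-degenerate 2-cocycle, and τ ∈ G. Then the natural number |N_τ|·|Rad_τ| is a perfect square, and its positive integer square root divides |M|. -/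
/-!
The commutator `c(φ, ψ) = ω(φ, ψ) / ω(ψ, φ)` of a 2-cocycle on an abelian group is an alternating
bicharacter, and `Rad_τ` is the radical on `N_τ` of the alternating bicharacter
`b((φ, ψ), (φ', ψ')) = c(φ, φ') / c(ψ, ψ')` of `M̂ × M̂`, which is non-degenerate because `c` is.

An alternating bicharacter `b` with values in a field splits off hyperbolic planes: if `b x y`
generates all values of `b` and has order `n`, then `H ≅ (ℤ/n)² × W` with `W` the orthogonal of
`x, y`, and `W` has the same radical. By induction `|N_τ| · |Rad_τ| = t²`. On the other hand,
`b` identifies `M̂ × M̂` with its character group, so the orthogonal of `N_τ` has order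
`|M̂|² / |N_τ|` and contains `Rad_τ`; hence `t² ∣ |M̂|² ∣ |M|²`.
-/

open scoped TensorProduct BigOperators
open MonoidAlgebra

noncomputable section

variable (K : Type) [Field K] {G : Type} [Group G]

/-- The primitive idempotent `e_φ^M ∈ K M ⊆ K G` attached to a character `φ` of a subgroup
`M` of `G`. -/
def idem (M : Subgroup G) (φ : ↥M →* Kˣ) : MonoidAlgebra K G :=
  (Nat.card M : K)⁻¹ • ∑ᶠ m : ↥M, ((φ m⁻¹ : Kˣ) : K) • MonoidAlgebra.of K G (m : G)

/-- `N_τ = {(φ,ψ) ∈ M̂ × M̂ : ψ(m) = φ(τ⁻¹mτ) for all m ∈ M ∩ τMτ⁻¹}`. -/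
def Ntau (M : Subgroup G) (τ : G) : Set ((↥M →* Kˣ) × (↥M →* Kˣ)) :=
  {p | ∀ (m : G) (hm : m ∈ M) (hm' : τ⁻¹ * m * τ ∈ M),
    p.2 ⟨m, hm⟩ = p.1 ⟨τ⁻¹ * m * τ, hm'⟩}

/-- The `2`-cocycle `(ω,ω⁻¹)` on `M̂ × M̂`. -/
def pairCocycle (M : Subgroup G) (ω : (↥M →* Kˣ) → (↥M →* Kˣ) → Kˣ)
    (x y : (↥M →* Kˣ) × (↥M →* Kˣ)) : Kˣ :=
  ω x.1 y.1 * (ω x.2 y.2)⁻¹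

/-- `Rad_τ`, the radical of the restriction of `(ω,ω⁻¹)` to `N_τ`. -/
def Radtau (M : Subgroup G) (ω : (↥M →* Kˣ) → (↥M →* Kˣ) → Kˣ) (τ : G) :
    Set ((↥M →* Kˣ) × (↥M →* Kˣ)) :=
  {x ∈ Ntau K M τ | ∀ y ∈ Ntau K M τ, pairCocycle K M ω x y = pairCocycle K M ω y x}

/-- `(Rad_τ)^⊥ = {(m,m') ∈ M × M : φ(m)·ψ(m') = 1 for all (φ,ψ) ∈ Rad_τ}`. -/
def RadtauPerp (M : Subgroup G) (ω : (↥M →* Kˣ) → (↥M →* Kˣ) → Kˣ) (τ : G) :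
    Set (↥M × ↥M) :=
  {q | ∀ p ∈ Radtau K M ω τ, p.1 q.1 * p.2 q.2 = 1}

namespace MonoidHom

section Bicharacter

variable {H C : Type*} [CommGroup H] [CommGroup C]

def domRestrict₁₂ (b : H →* H →* C) (W : Subgroup H) : W →* W →* C :=
  (domRestrictHom W C).comp (b.domRestrict W)

@[simp]
theorem domRestrict₁₂_apply (b : H →* H →* C) (W : Subgroup H) (x y : W) :
    b.domRestrict₁₂ W x y = b x y :=
  rfl

theorem apply_swap_eq_inv {b : H →* H →* C} (hb : ∀ x, b x x = 1) (x y : H) :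
    b y x = (b x y)⁻¹ := by
  have h := hb (x * y)
  simp only [map_mul, mul_apply, hb, one_mul, mul_one] at h
  exact eq_inv_of_mul_eq_one_left h

section Hyperbolic

variable {b : H →* H →* C} (hb : ∀ x, b x x = 1) {x y : H}

include hb in
theorem prod_apply_zpow_mul_zpow (i j : ℤ) :
    (b x).prod (b y) (y ^ i * x ^ j) = (b x y ^ i, (b x y ^ j)⁻¹) := by
  simp [apply_swap_eq_inv hb y x, hb]

variable (hgen : ∀ u v, b u v ∈ Subgroup.zpowers (b x y))

include hb hgen in
theorem range_prod_eq_prod_zpowers :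
    ((b x).prod (b y)).range = (Subgroup.zpowers (b x y)).prod (Subgroup.zpowers (b x y)) := by
  refine le_antisymm ?_ fun z hz => ?_
  · rintro _ ⟨h, rfl⟩
    exact ⟨hgen x h, hgen y h⟩
  · obtain ⟨⟨i, hi⟩, ⟨j, hj⟩⟩ := hz
    refine ⟨y ^ i * x ^ (-j), ?_⟩
    rw [prod_apply_zpow_mul_zpow hb, zpow_neg, inv_inv]
    exact Prod.ext hi hj

include hb hgen in
theorem card_eq_orderOf_sq_mul_card_ker_prod :
    Nat.card H = orderOf (b x y) ^ 2 * Nat.card ((b x).prod (b y)).ker := by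
  rw [Subgroup.card_eq_card_quotient_mul_card_subgroup ((b x).prod (b y)).ker,
    Nat.card_congr (QuotientGroup.quotientKerEquivRange _).toEquiv,
    range_prod_eq_prod_zpowers hb hgen, Nat.card_congr (Subgroup.prodEquiv _ _).toEquiv,
    Nat.card_prod, Nat.card_zpowers, sq]

include hb hgen in
theorem map_ker_domRestrict₁₂_ker_prod :
    (b.domRestrict₁₂ ((b x).prod (b y)).ker).ker.map (Subgroup.subtype _) = b.ker := by
  set W := ((b x).prod (b y)).ker
  have hW : ∀ w ∈ W, b x w = 1 ∧ b y w = 1 := fun w hw => Prod.mk_eq_one.mp hw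
  ext h
  constructor
  · rintro ⟨w, hw, rfl⟩
    have hwx : b w x = 1 := by rw [apply_swap_eq_inv hb, (hW w w.2).1, inv_one]
    have hwy : b w y = 1 := by rw [apply_swap_eq_inv hb, (hW w w.2).2, inv_one]
    ext v
    obtain ⟨i, hi⟩ := hgen x v
    obtain ⟨j, hj⟩ := hgen y v
    set s := y ^ i * x ^ (-j)
    have hvs : v * s⁻¹ ∈ W := by
      rw [mem_ker, map_mul, map_inv, prod_apply_zpow_mul_zpow hb, zpow_neg, inv_inv, mul_inv_eq_one]
      exact Prod.ext hi.symm hj.symm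
    have hws : b w s = 1 := by simp [s, hwx, hwy]
    calc b w v = b w (v * s⁻¹) * b w s := by rw [map_mul, map_inv, inv_mul_cancel_right]
      _ = 1 := by rw [hws, mul_one]; exact DFunLike.congr_fun (mem_ker.mp hw) ⟨_, hvs⟩
  · intro hh
    have hhW : h ∈ W := Prod.mk_eq_one.mpr
      ⟨by rw [apply_swap_eq_inv hb, mem_ker.mp hh, one_apply, inv_one],
        by rw [apply_swap_eq_inv hb, mem_ker.mp hh, one_apply, inv_one]⟩
    exact ⟨⟨h, hhW⟩, by ext; simp [mem_ker.mp hh], rfl⟩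

end Hyperbolic

end Bicharacter

section Field

variable {F H : Type*} [Field F] [CommGroup H] [Finite H]

theorem exists_forall_mem_zpowers (b : H →* H →* Fˣ) :
    ∃ x y, ∀ u v, b u v ∈ Subgroup.zpowers (b x y) := by
  -- `b x` of maximal order `n` in the image of `b`; the values of `b x` form a cyclic group of
  -- order `n`, and every value of `b` is an `n`-th root of unity
  obtain ⟨φ, hφ⟩ := Monoid.exists_orderOf_eq_exponent (G := b.range) .of_finite
  obtain ⟨x, hx⟩ := φ.2
  rw [← Subgroup.orderOf_coe, ← hx] at hφ
  have hpow : ∀ u, b u ^ orderOf (b x) = 1 := fun u => by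
    have := Monoid.order_dvd_exponent (⟨b u, u, rfl⟩ : b.range)
    rw [← Subgroup.orderOf_coe, ← hφ] at this
    exact orderOf_dvd_iff_pow_eq_one.mp this
  have : Finite (b x).range := .of_surjective _ (b x).rangeRestrict_surjective
  obtain ⟨ψ, hψ⟩ := IsCyclic.exists_generator (α := (b x).range)
  obtain ⟨y, hy⟩ := ψ.2
  have hxv : ∀ v, b x v ∈ Subgroup.zpowers (b x y) := fun v => by
    obtain ⟨k, hk⟩ := Subgroup.mem_zpowers_iff.mp (hψ ⟨b x v, v, rfl⟩)
    exact ⟨k, by simpa [hy] using congr(Subtype.val $hk)⟩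
  have hord : orderOf (b x y) = orderOf (b x) := by
    refine Nat.dvd_antisymm (orderOf_dvd_of_pow_eq_one congr($(hpow x) y)) ?_
    refine orderOf_dvd_of_pow_eq_one (MonoidHom.ext fun v => ?_)
    rw [pow_apply, one_apply, ← orderOf_dvd_iff_pow_eq_one]
    exact orderOf_dvd_of_mem_zpowers (hxv v)
  have : NeZero (orderOf (b x y)) := ⟨by rw [hord, hφ]; exact Monoid.exponent_ne_zero_of_finite⟩
  refine ⟨x, y, fun u v => ?_⟩
  rw [(IsPrimitiveRoot.orderOf (b x y)).zpowers_eq, mem_rootsOfUnity, hord]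
  exact congr($(hpow u) v)

theorem exists_card_mul_card_ker_eq_sq (b : H →* H →* Fˣ) (hb : ∀ x, b x x = 1) :
    ∃ t, Nat.card H * Nat.card b.ker = t ^ 2 := by
  induction hH : Nat.card H using Nat.strong_induction_on generalizing H with
  | _ n ih =>
  by_cases hb1 : b = 1
  · exact ⟨n, by rw [hb1, ker_one, Subgroup.card_top, hH, sq]⟩
  obtain ⟨x, y, hgen⟩ := exists_forall_mem_zpowers b
  set W := ((b x).prod (b y)).ker
  have hcard : n = orderOf (b x y) ^ 2 * Nat.card W :=
    hH ▸ card_eq_orderOf_sq_mul_card_ker_prod hb hgen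
  have hord : 1 < orderOf (b x y) := by
    refine Nat.one_lt_iff_ne_zero_and_ne_one.mpr ⟨fun h0 => ?_, fun h1 => hb1 ?_⟩
    · exact Nat.card_pos.ne' (by simpa [h0, ← hH] using hcard)
    · ext u v
      simpa [orderOf_eq_one_iff.mp h1] using hgen u v
  have hlt : Nat.card W < n := hcard ▸ lt_mul_left Nat.card_pos (one_lt_pow₀ hord two_ne_zero)
  obtain ⟨t, ht⟩ := ih (Nat.card W) hlt (b.domRestrict₁₂ W) (fun w => hb w) rfl
  refine ⟨orderOf (b x y) * t, ?_⟩
  rw [← map_ker_domRestrict₁₂_ker_prod hb hgen, Subgroup.card_map_of_injective W.subtype_injective,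
    hcard, mul_assoc, ht, mul_pow]

end Field

theorem card_mul_card_ker_domRestrict₁₂_dvd {R H : Type*} [CommMonoid R] [CommGroup H] [Finite H]
    [HasEnoughRootsOfUnity R (Monoid.exponent H)] {b : H →* H →* Rˣ} (hb : b.ker = ⊥)
    (N : Subgroup H) : Nat.card N * Nat.card (b.domRestrict₁₂ N).ker ∣ Nat.card H := by
  have hcard := CommGroup.card_monoidHom_of_hasEnoughRootsOfUnity H R
  have : Finite (H →* Rˣ) := Nat.finite_of_card_ne_zero (hcard ▸ Nat.card_pos.ne')
  have hbij : Function.Bijective b :=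
    (Nat.bijective_iff_injective_and_card b).mpr ⟨(ker_eq_bot_iff b).mp hb, hcard.symm⟩
  set P := (domRestrictHom N Rˣ).ker.comap b
  have hP : Nat.card P = Nat.card (H ⧸ N) := by
    rw [← CommGroup.card_domRestrictHom_ker R N]
    exact Nat.card_congr ((Equiv.ofBijective b hbij).subtypeEquiv fun _ => Iff.rfl)
  have hle : (b.domRestrict₁₂ N).ker.map N.subtype ≤ P := by
    rintro _ ⟨n, hn, rfl⟩
    exact hn
  calc Nat.card N * Nat.card (b.domRestrict₁₂ N).ker
      = Nat.card N * Nat.card ((b.domRestrict₁₂ N).ker.map N.subtype) := by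
        rw [Subgroup.card_map_of_injective N.subtype_injective]
    _ ∣ Nat.card N * Nat.card (H ⧸ N) := hP ▸ mul_dvd_mul_left _ (Subgroup.card_dvd_of_le hle)
    _ = Nat.card H := by rw [mul_comm, ← Subgroup.card_eq_card_quotient_mul_card_subgroup]

end MonoidHom

section Cocycle

variable {A C : Type*} [CommGroup A] [CommGroup C] {ω : A → A → C}
  (hω : ∀ a b c, ω a b * ω (a * b) c = ω b c * ω a (b * c))

include hω in
theorem cocycle_div_swap_mul_right (a b c : A) :
    ω a (b * c) / ω (b * c) a = ω a b / ω b a * (ω a c / ω c a) := by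
  have e₁ := hω a b c
  have e₂ := hω b c a
  have e₃ := hω b a c
  rw [mul_comm b a, mul_comm c a] at *
  rw [div_mul_div_comm, div_eq_div_iff_mul_eq_mul]
  -- after multiplying by `ω b c * ω (a * b) c`, both sides reduce by `e₁`, `e₂`, `e₃` to the same word
  exact mul_left_cancel (a := ω b c * ω (a * b) c) (by grind)

variable (ω) in
def commutatorPairing : A →* A →* C :=
  MonoidHom.mk' (fun a => MonoidHom.mk' (fun b => ω a b / ω b a) (cocycle_div_swap_mul_right hω a))
    fun a a' => MonoidHom.ext fun b => by
      simp only [MonoidHom.mk'_apply, MonoidHom.mul_apply]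
      rw [← inv_div, cocycle_div_swap_mul_right hω, mul_inv, inv_div, inv_div]

@[simp]
theorem commutatorPairing_apply (a b : A) : commutatorPairing ω hω a b = ω a b / ω b a :=
  rfl

theorem commutatorPairing_self (a : A) : commutatorPairing ω hω a a = 1 :=
  div_self' _

end Cocycle

theorem card_monoidHom_units_dvd_card (F M : Type*) [CommMonoid F] [Group M] [Finite M]
    [HasEnoughRootsOfUnity F (Monoid.exponent (Abelianization M))] :
    Nat.card (M →* Fˣ) ∣ Nat.card M := by
  rw [Nat.card_congr Abelianization.lift, CommGroup.card_monoidHom_of_hasEnoughRootsOfUnity]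
  exact Subgroup.card_quotient_dvd_card _

section Ntau

def ntauSubgroup (M : Subgroup G) (τ : G) : Subgroup ((↥M →* Kˣ) × (↥M →* Kˣ)) where
  carrier := Ntau K M τ
  one_mem' _ _ _ := rfl
  mul_mem' hp hq m hm hm' := by
    simp only [Prod.snd_mul, Prod.fst_mul, MonoidHom.mul_apply, hp m hm hm', hq m hm hm']
  inv_mem' hp m hm hm' := by
    simp only [Prod.fst_inv, Prod.snd_inv, MonoidHom.inv_apply, hp m hm hm']

variable {K} {M : Subgroup G} {ω : (↥M →* Kˣ) → (↥M →* Kˣ) → Kˣ}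
  (hω : ∀ φ ψ χ : ↥M →* Kˣ, ω φ ψ * ω (φ * ψ) χ = ω ψ χ * ω φ (ψ * χ))

include hω in
theorem pairCocycle_cocycle (x y z : (↥M →* Kˣ) × (↥M →* Kˣ)) :
    pairCocycle K M ω x y * pairCocycle K M ω (x * y) z =
      pairCocycle K M ω y z * pairCocycle K M ω x (y * z) := by
  simp only [pairCocycle, Prod.fst_mul, Prod.snd_mul]
  rw [mul_mul_mul_comm, ← mul_inv, hω, hω, mul_inv, mul_mul_mul_comm]

def pairCommutator :=
  commutatorPairing (A := (↥M →* Kˣ) × (↥M →* Kˣ)) (pairCocycle K M ω) (pairCocycle_cocycle hω)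

theorem pairCommutator_apply (x y : (↥M →* Kˣ) × (↥M →* Kˣ)) :
    pairCommutator hω x y = commutatorPairing ω hω x.1 y.1 / commutatorPairing ω hω x.2 y.2 := by
  simp only [pairCommutator, commutatorPairing_apply, pairCocycle, ← div_eq_mul_inv]
  exact div_div_div_comm _ _ _ _

theorem ker_pairCommutator
    (hnondeg : ∀ φ : ↥M →* Kˣ, (∀ ψ : ↥M →* Kˣ, ω φ ψ = ω ψ φ) → φ = 1) :
    (pairCommutator hω).ker = ⊥ := by
  refine eq_bot_iff.mpr fun x hx => ?_
  have h (y : (↥M →* Kˣ) × (↥M →* Kˣ)) :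
      commutatorPairing ω hω x.1 y.1 = commutatorPairing ω hω x.2 y.2 := by
    rw [← div_eq_one, ← pairCommutator_apply, MonoidHom.mem_ker.mp hx,
      MonoidHom.one_apply]
  have hnondeg' (φ : ↥M →* Kˣ) (hφ : ∀ ψ, commutatorPairing ω hω φ ψ = 1) : φ = 1 :=
    hnondeg φ fun ψ => div_eq_one.mp (hφ ψ)
  exact Prod.ext (hnondeg' x.1 fun ψ => by simpa only [map_one] using h (ψ, 1))
    (hnondeg' x.2 fun ψ => by simpa only [map_one] using (h (1, ψ)).symm)

theorem card_radtau (τ : G) :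
    Nat.card (Radtau K M ω τ) =
      Nat.card ((pairCommutator hω).domRestrict₁₂ (ntauSubgroup K M τ)).ker := by
  let N := ntauSubgroup K M τ
  have hrad : Radtau K M ω τ = (((pairCommutator hω).domRestrict₁₂ N).ker.map N.subtype : Set _) := by
    ext x
    constructor
    · rintro ⟨hx, hrad⟩
      exact ⟨⟨x, hx⟩, MonoidHom.ext fun y => div_eq_one.mpr (hrad y y.2), rfl⟩
    · rintro ⟨n, hn, rfl⟩
      exact ⟨n.2, fun y hy => div_eq_one.mp congr($hn ⟨y, hy⟩)⟩
  rw [hrad, SetLike.coe_sort_coe, Subgroup.card_map_of_injective N.subtype_injective]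

end Ntau

theorem stmt8 [IsAlgClosed K] [CharZero K] [Finite G] (M : Subgroup G)
    (ω : (↥M →* Kˣ) → (↥M →* Kˣ) → Kˣ)
    (hcocycle : ∀ φ ψ χ : ↥M →* Kˣ, ω φ ψ * ω (φ * ψ) χ = ω ψ χ * ω φ (ψ * χ))
    (hnondeg : ∀ φ : ↥M →* Kˣ, (∀ ψ : ↥M →* Kˣ, ω φ ψ = ω ψ φ) → φ = 1)
    (τ : G) :
    ∃ s : ℕ, Nat.card (Ntau K M τ) * Nat.card (Radtau K M ω τ) = s ^ 2 ∧
      s ∣ Nat.card M := by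
  have roots (X : Type) [Group X] [Finite X] : HasEnoughRootsOfUnity K (Monoid.exponent X) :=
    have : NeZero (Monoid.exponent X) := ⟨Monoid.exponent_ne_zero_of_finite⟩
    inferInstance
  let b := pairCommutator hcocycle
  let N := ntauSubgroup K M τ
  obtain ⟨t, ht⟩ := MonoidHom.exists_card_mul_card_ker_eq_sq (H := N) (b.domRestrict₁₂ N)
    fun x => commutatorPairing_self (pairCocycle_cocycle hcocycle) x.1
  have hdvd : t ^ 2 ∣ Nat.card M ^ 2 := calc
    t ^ 2 = Nat.card N * Nat.card (b.domRestrict₁₂ N).ker := ht.symm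
    _ ∣ Nat.card ((↥M →* Kˣ) × (↥M →* Kˣ)) :=
      have := roots ((↥M →* Kˣ) × (↥M →* Kˣ))
      MonoidHom.card_mul_card_ker_domRestrict₁₂_dvd
        (ker_pairCommutator hcocycle hnondeg) N
    _ = Nat.card (↥M →* Kˣ) ^ 2 := by rw [Nat.card_prod, sq]
    _ ∣ Nat.card M ^ 2 :=
      have := roots (Abelianization M)
      pow_dvd_pow_of_dvd (card_monoidHom_units_dvd_card K M) 2
  exact ⟨t, by rw [card_radtau hcocycle]; exact ht, (Nat.pow_dvd_pow_iff two_ne_zero).mp hdvd⟩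
end
end

section
/- With the notation of the matrix setup: for every a ∈ F_{q^n} with a ≠ 0, one has (τ − Id)(F_q^{2n}) + (σ_a·τ·σ_a⁻¹ − Id)(F_q^{2n}) = F_q^{2n}. Consequently, for any field K, the only group homomorphism ν : (F_q^{2n}, +) → Kˣ satisfying both ν(τ·v) = ν(v) and ν((σ_a·τ·σ_a⁻¹)·v) = ν(v) for all v ∈ F_q^{2n} is the trivial character. -/
open scoped BigOperators
open Matrix

noncomputable section

variable {p m n : ℕ} (Fq : Type) [Field Fq] [Fintype Fq]
variable (E : Type) [Field E] [Algebra Fq E]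

/-- The block matrix `τ = [[Id, 0],[Id, Id]]` of the matrix setup. -/
def tauMat : Matrix (Fin n ⊕ Fin n) (Fin n ⊕ Fin n) Fq :=
  Matrix.fromBlocks 1 0 1 1

/-- The block matrix `σ_a = [[Id, Φ(a)],[0, Id]]` of the matrix setup, where
`Φ : F_{q^n} → M_n(F_q)` sends `a` to the matrix of multiplication by `a` in the chosen
basis. -/
def sigmaMat (b : Module.Basis (Fin n) Fq E) (a : E) : Matrix (Fin n ⊕ Fin n) (Fin n ⊕ Fin n) Fq :=
  Matrix.fromBlocks 1 (Algebra.leftMulMatrix b a) 0 1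

/-! The image of `τ - 1` is the second block `0 ⊕ F_q^n`, and conjugating by `σ_a` carries it to
the graph `{(Φ(a) y, y)}`. As `Φ(a)` is invertible, the two together span `F_q^{2n}`. A character
invariant under a matrix `M` is trivial on the image of `M - 1`, hence trivial on this span. -/

section BlockMatrices

variable {R ι : Type*} [CommRing R] [Fintype ι] [DecidableEq ι]

theorem fromBlocks_one_zero_one_one_sub_one_mulVec (x y : ι → R) :
    (fromBlocks 1 0 1 1 - 1 : Matrix (ι ⊕ ι) (ι ⊕ ι) R) *ᵥ Sum.elim x y =
      Sum.elim (0 : ι → R) x := by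
  rw [sub_mulVec, one_mulVec, fromBlocks_mulVec]
  ext (i | i) <;> simp

theorem fromBlocks_one_zero_one_mulVec (A : Matrix ι ι R) (x y : ι → R) :
    fromBlocks 1 A 0 1 *ᵥ Sum.elim x y = Sum.elim (x + A *ᵥ y) y := by
  rw [fromBlocks_mulVec]
  ext (i | i) <;> simp

theorem det_fromBlocks_one_zero_one (A : Matrix ι ι R) : (fromBlocks 1 A 0 1).det = 1 := by
  rw [det_fromBlocks_zero₂₁, det_one, one_mul]

theorem conj_sub_one_mulVec_mulVec {κ : Type*} [Fintype κ] [DecidableEq κ]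
    (S T : Matrix κ κ R) (hS : IsUnit S.det) (v : κ → R) :
    (S * T * S⁻¹ - 1) *ᵥ (S *ᵥ v) = S *ᵥ ((T - 1) *ᵥ v) := by
  rw [sub_mulVec, mulVec_mulVec, Matrix.mul_assoc, nonsing_inv_mul S hS, Matrix.mul_one,
    one_mulVec, sub_mulVec, one_mulVec, mulVec_sub, mulVec_mulVec]

theorem range_sub_one_sup_range_conj_sub_one_eq_top {A : Matrix ι ι R} (hA : IsUnit A) :
    LinearMap.range (fromBlocks 1 0 1 1 - 1 : Matrix (ι ⊕ ι) (ι ⊕ ι) R).mulVecLin ⊔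
      LinearMap.range (fromBlocks 1 A 0 1 * fromBlocks 1 0 1 1 * (fromBlocks 1 A 0 1)⁻¹ - 1 :
        Matrix (ι ⊕ ι) (ι ⊕ ι) R).mulVecLin = ⊤ := by
  refine eq_top_iff.2 fun w _ => ?_
  obtain ⟨x, hx⟩ := mulVec_surjective_iff_isUnit.2 hA (w ∘ Sum.inl)
  have hσ : IsUnit (fromBlocks 1 A 0 1).det := (det_fromBlocks_one_zero_one A).symm ▸ isUnit_one
  refine Submodule.mem_sup.2 ⟨Sum.elim (0 : ι → R) (w ∘ Sum.inr - x),
    ⟨Sum.elim (w ∘ Sum.inr - x) 0, ?_⟩, Sum.elim (w ∘ Sum.inl) x,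
    ⟨fromBlocks 1 A 0 1 *ᵥ Sum.elim x 0, ?_⟩, ?_⟩
  · exact fromBlocks_one_zero_one_one_sub_one_mulVec _ _
  · simp only [mulVecLin_apply]
    rw [conj_sub_one_mulVec_mulVec _ _ hσ, fromBlocks_one_zero_one_one_sub_one_mulVec,
      fromBlocks_one_zero_one_mulVec, zero_add, hx]
  · ext (i | i) <;> simp

end BlockMatrices

theorem MonoidHom.apply_ofAdd_eq_one_of_mem_range_sub_one {R ι G : Type*} [CommRing R]
    [Fintype ι] [DecidableEq ι] [Group G] (ν : Multiplicative (ι → R) →* G) {M : Matrix ι ι R}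
    (hM : ∀ v, ν (Multiplicative.ofAdd (M *ᵥ v)) = ν (Multiplicative.ofAdd v)) {w : ι → R}
    (hw : w ∈ LinearMap.range (M - 1).mulVecLin) : ν (Multiplicative.ofAdd w) = 1 := by
  obtain ⟨v, rfl⟩ := hw
  rw [mulVecLin_apply, sub_mulVec, one_mulVec, ofAdd_sub, map_div, hM, div_self']

theorem MonoidHom.eq_one_of_sup_eq_top {R V G : Type*} [Semiring R] [AddCommMonoid V]
    [Module R V] [Monoid G] (ν : Multiplicative V →* G) {P Q : Submodule R V} (hPQ : P ⊔ Q = ⊤)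
    (hP : ∀ v ∈ P, ν (Multiplicative.ofAdd v) = 1) (hQ : ∀ v ∈ Q, ν (Multiplicative.ofAdd v) = 1) :
    ν = 1 := by
  refine MonoidHom.ext fun w => ?_
  obtain ⟨y, hy, z, hz, hyz⟩ := Submodule.mem_sup.1 (hPQ ▸ Submodule.mem_top : w.toAdd ∈ P ⊔ Q)
  rw [MonoidHom.one_apply, ← ofAdd_toAdd w, ← hyz, ofAdd_add, map_mul, hP y hy, hQ z hz, one_mul]

theorem stmt15
    (b : Module.Basis (Fin n) Fq E) (a : E) (ha : a ≠ 0) :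
    LinearMap.range (tauMat Fq - 1 : Matrix (Fin n ⊕ Fin n) (Fin n ⊕ Fin n) Fq).mulVecLin ⊔
      LinearMap.range
        (sigmaMat Fq E b a * tauMat Fq * (sigmaMat Fq E b a)⁻¹ - 1).mulVecLin = ⊤ ∧
    ∀ (K : Type) (_ : Field K) (ν : Multiplicative ((Fin n ⊕ Fin n) → Fq) →* Kˣ),
      (∀ v : (Fin n ⊕ Fin n) → Fq,
        ν (Multiplicative.ofAdd ((tauMat Fq).mulVec v)) = ν (Multiplicative.ofAdd v)) →
      (∀ v : (Fin n ⊕ Fin n) → Fq,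
        ν (Multiplicative.ofAdd
            ((sigmaMat Fq E b a * tauMat Fq * (sigmaMat Fq E b a)⁻¹).mulVec v)) =
          ν (Multiplicative.ofAdd v)) →
      ν = 1 := by
  have hΦ : IsUnit (Algebra.leftMulMatrix b a) := (Ne.isUnit ha).map _
  have hspan := range_sub_one_sup_range_conj_sub_one_eq_top hΦ
  exact ⟨hspan, fun K _ ν hτ hσ => ν.eq_one_of_sup_eq_top hspan
    (fun _ => ν.apply_ofAdd_eq_one_of_mem_range_sub_one hτ)
    (fun _ => ν.apply_ofAdd_eq_one_of_mem_range_sub_one hσ)⟩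

end
end
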